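/- The classical contraposition axiom (3) holds in base-extension semantics for S5: (φ→⊥)→(ψ→⊥) ⊩ ψ→φ, i.e., at every base ℬ and set of S5-modal relations 𝔯_A, if (φ→⊥)→(ψ→⊥) is valid at ℬ then ψ→φ is valid at ℬ. -/

import Mathlib

/-- A base rule: a finite set of premiss atoms and a conclusion atom. -/
abbrev Rule := Finset ℕ × ℕ

/-- A base is a collection of base rules. -/
abbrev Base := Set Rule

/-- Derivability of an atom in a base: closure of ∅ under the rules. -/
inductive Deriv (B : Base) : ℕ → Prop where
  | step (L : Finset ℕ) (p : ℕ) (mem : (L, p) ∈ B)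
      (prem : ∀ q ∈ L, Deriv B q) : Deriv B p

/-- A base is inconsistent iff every atom is derivable in it. -/
def Inconsistent (B : Base) : Prop := ∀ p : ℕ, Deriv B p

/-- Formulae of the multi-agent modal language over agents `A`. -/
inductive Form (A : Type) where
  | atom : ℕ → Form A
  | bot  : Form A
  | imp  : Form A → Form A → Form A
  | K    : A → Form A → Form A

/-- Negation abbreviation ¬φ := φ → ⊥. -/
def Form.neg {A : Type} (φ : Form A) : Form A := Form.imp φ Form.bot

/-- Validity at a base given a family of relations on bases. -/
def Valid {A : Type} (R : A → Base → Base → Prop) : Base → Form A → Prop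
  | B, .atom p => Deriv B p
  | B, .bot => ∀ p : ℕ, Deriv B p
  | B, .imp φ ψ => ∀ C : Base, B ⊆ C → Valid R C φ → Valid R C ψ
  | B, .K a φ => ∀ C : Base, R a B C → Valid R C φ

/-- Validity of φ at ℬ from a (nonempty) set of assumptions Γ. -/
def GammaValid {A : Type} (R : A → Base → Base → Prop)
    (Γ : Set (Form A)) (B : Base) (φ : Form A) : Prop :=
  ∀ C : Base, B ⊆ C → (∀ ψ ∈ Γ, Valid R C ψ) → Valid R C φ

def Euclidean {X : Sort*} (r : X → X → Prop) : Prop :=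
  ∀ x y z, r x y → r x z → r y z

/-- S5-modal relations on bases. -/
structure S5Rel (r : Base → Base → Prop) : Prop where
  incon_succ : ∀ B, Inconsistent B →
    (∃ C, r B C ∧ Inconsistent C) ∧ ∀ D, r B D → Inconsistent D
  con_succ : ∀ B, ¬ Inconsistent B → ∀ C, r B C → ¬ Inconsistent C
  zig : ∀ B C, r B C → ∀ D, B ⊆ D → ¬ Inconsistent D → ∃ E, C ⊆ E ∧ r D E
  zag : ∀ B C, r B C → ¬ Inconsistent C → ∀ D, D ⊆ B → ∃ E, E ⊆ C ∧ r D E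
  refl : ∀ B, r B B
  trans : ∀ B C D, r B C → r C D → r B D
  eucl : ∀ B C D, r B C → r B D → r C D

/-- Maximally-consistent bases. -/
def MaxCon (B : Base) : Prop :=
  ¬ Inconsistent B ∧ ∀ δ : Rule, δ ∈ B ∨ Inconsistent (insert δ B)

/-- A formula is valid iff it is valid at every base for every family of S5-modal relations. -/
def ValidAll {A : Type} (φ : Form A) : Prop :=
  ∀ R : A → Base → Base → Prop, (∀ a, S5Rel (R a)) → ∀ B : Base, Valid R B φ

/-! Suppose `ψ` holds at an extension `D` but `φ` does not. Failure of a formula at a base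
propagates to a maximally consistent extension `E` (for modal formulas this uses zig and the
symmetry of S5 relations), and at `E` excluded middle holds, so `¬φ` is valid there. The premiss
then yields `¬ψ` at `E`, while `ψ` persists to `E`; hence `E` would be inconsistent. -/

theorem Deriv.mono {B C : Base} (h : B ⊆ C) {p : ℕ} (hd : Deriv B p) : Deriv C p := by
  induction hd with
  | step L p mem _ ih => exact .step L p (h mem) ih

theorem Inconsistent.mono {B C : Base} (h : B ⊆ C) (hB : Inconsistent B) : Inconsistent C :=
  fun p => (hB p).mono h

theorem S5Rel.symm {r : Base → Base → Prop} (hr : S5Rel r) {B C : Base} (h : r B C) : r C B :=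
  hr.eucl B C B h (hr.refl B)

theorem MaxCon.eq_of_subset {E G : Base} (hE : MaxCon E) (hEG : E ⊆ G)
    (hG : ¬ Inconsistent G) : G = E := by
  refine Set.Subset.antisymm (fun δ hδ => ?_) hEG
  exact (hE.2 δ).resolve_right fun h => hG (h.mono (Set.insert_subset hδ hEG))

/-- Zig gives a successor of `M` extending `E`; by maximality it is `E` itself. -/
theorem S5Rel.rel_of_subset_of_maxCon {r : Base → Base → Prop} (hr : S5Rel r) {G E M : Base}
    (hGE : r G E) (hE : MaxCon E) (hGM : G ⊆ M) (hM : ¬ Inconsistent M) : r M E := by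
  obtain ⟨H, hEH, hMH⟩ := hr.zig G E hGE M hGM hM
  rwa [← hE.eq_of_subset hEH (hr.con_succ M hM H hMH)]

/-- The largest base whose derivable atoms are exactly those of `S`. -/
def canonicalBase (S : Set ℕ) : Base := {r | r.2 ∈ S ∨ ¬ (↑r.1 : Set ℕ) ⊆ S}

theorem deriv_canonicalBase_iff {S : Set ℕ} {p : ℕ} : Deriv (canonicalBase S) p ↔ p ∈ S := by
  refine ⟨fun h => ?_, fun hp => .step ∅ p (.inl hp) (by simp)⟩
  induction h with
  | step L q mem _ ih => exact mem.resolve_right (not_not.mpr ih)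

theorem subset_canonicalBase (B : Base) : B ⊆ canonicalBase {p | Deriv B p} := by
  rintro ⟨L, p⟩ hLp
  by_cases hL : (↑L : Set ℕ) ⊆ {p | Deriv B p}
  · exact .inl (Deriv.step L p hLp hL)
  · exact .inr hL

theorem maxCon_canonicalBase {S : Set ℕ} {p : ℕ} (hp : p ∉ S) : MaxCon (canonicalBase S) := by
  refine ⟨fun hinc => hp (deriv_canonicalBase_iff.mp (hinc p)), fun ⟨L, q⟩ => ?_⟩
  by_cases hδ : (L, q) ∈ canonicalBase S
  · exact .inl hδ
  right
  obtain ⟨hq, hL⟩ : q ∉ S ∧ (↑L : Set ℕ) ⊆ S := by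
    simpa only [canonicalBase, Set.mem_ofPred_eq, not_or, not_not] using hδ
  have hsub : canonicalBase S ⊆ insert (L, q) (canonicalBase S) := Set.subset_insert _ _
  have hqd : Deriv (insert (L, q) (canonicalBase S)) q :=
    .step L q (Set.mem_insert _ _) fun x hx => (deriv_canonicalBase_iff.mpr (hL hx)).mono hsub
  -- once `q ∉ S` is derivable, every rule `({q}, x)` belongs to the canonical base
  intro x
  refine .step {q} x (hsub (.inr fun h => hq (h (Finset.mem_singleton_self q)))) ?_
  simpa only [Finset.mem_singleton, forall_eq] using hqd

theorem exists_maxCon_superset_not_deriv {B : Base} {p : ℕ} (hp : ¬ Deriv B p) :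
    ∃ E, MaxCon E ∧ B ⊆ E ∧ ¬ Deriv E p :=
  ⟨_, maxCon_canonicalBase hp, subset_canonicalBase B, fun h => hp (deriv_canonicalBase_iff.mp h)⟩

theorem exists_maxCon_superset {B : Base} (hB : ¬ Inconsistent B) :
    ∃ E, MaxCon E ∧ B ⊆ E := by
  obtain ⟨p, hp⟩ := not_forall.mp hB
  obtain ⟨E, hE, hBE, -⟩ := exists_maxCon_superset_not_deriv hp
  exact ⟨E, hE, hBE⟩

section Validity

variable {A : Type} {R : A → Base → Base → Prop}

theorem Valid.of_inconsistent (hR : ∀ a, S5Rel (R a)) (φ : Form A) :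
    ∀ {B : Base}, Inconsistent B → Valid R B φ := by
  induction φ with
  | atom p => exact fun hB => hB p
  | bot => exact id
  | imp _ _ _ ihβ => exact fun hB _ hBC _ => ihβ (hB.mono hBC)
  | K a _ ih => exact fun hB C hBC => ih (((hR a).incon_succ _ hB).2 C hBC)

theorem Valid.mono (hR : ∀ a, S5Rel (R a)) (φ : Form A) :
    ∀ {B C : Base}, B ⊆ C → Valid R B φ → Valid R C φ := by
  induction φ with
  | atom _ => exact fun h hv => Deriv.mono h hv
  | bot => exact Inconsistent.mono
  | imp _ _ _ _ => exact fun h hv D hCD => hv D (h.trans hCD)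
  | K a _ ih =>
    intro B C h hv F hCF
    by_cases hF : Inconsistent F
    · exact .of_inconsistent hR _ hF
    · obtain ⟨G, hGF, hBG⟩ := (hR a).zag C F hCF hF B h
      exact ih hGF (hv G hBG)

theorem MaxCon.valid_neg_of_not_valid {E : Base} {φ : Form A} (hE : MaxCon E)
    (h : ¬ Valid R E φ) : Valid R E (φ.imp .bot) := by
  intro G hEG hφ
  by_contra hG
  exact h (hE.eq_of_subset hEG hG ▸ hφ)

theorem exists_maxCon_superset_not_valid (hR : ∀ a, S5Rel (R a)) (φ : Form A) :
    ∀ {B : Base}, ¬ Valid R B φ → ∃ E, MaxCon E ∧ B ⊆ E ∧ ¬ Valid R E φ := by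
  induction φ with
  | atom _ => exact exists_maxCon_superset_not_deriv
  | bot =>
    intro B hB
    obtain ⟨E, hE, hBE⟩ := exists_maxCon_superset hB
    exact ⟨E, hE, hBE, hE.1⟩
  | imp α β _ ihβ =>
    intro B h
    obtain ⟨F, hBF, hα, hβ⟩ : ∃ F, B ⊆ F ∧ Valid R F α ∧ ¬ Valid R F β := by
      simpa only [Valid, not_forall, exists_prop] using h
    obtain ⟨E, hE, hFE, hEβ⟩ := ihβ hβ
    exact ⟨E, hE, hBF.trans hFE, fun hv => hEβ (hv E subset_rfl (Valid.mono hR α hFE hα))⟩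
  | K a α ih =>
    intro B h
    obtain ⟨F, hBF, hα⟩ : ∃ F, R a B F ∧ ¬ Valid R F α := by
      simpa only [Valid, not_forall, exists_prop] using h
    obtain ⟨E, hE, hFE, hEα⟩ := ih hα
    -- move `B` along `F ⊆ E` by zig, then maximize the resulting successor of `E`
    obtain ⟨G, hBG, hEG⟩ := (hR a).zig F B ((hR a).symm hBF) E hFE hE.1
    have hG : ¬ Inconsistent G := (hR a).con_succ E hE.1 G hEG
    obtain ⟨M, hM, hGM⟩ := exists_maxCon_superset hG
    have hME : R a M E := (hR a).rel_of_subset_of_maxCon ((hR a).symm hEG) hE hGM hM.1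
    exact ⟨M, hM, hBG.trans hGM, fun hv => hEα (hv E hME)⟩

end Validity

/-- Axiom (3): (φ→⊥)→(ψ→⊥) ⊩ ψ→φ. -/
theorem stmt11 {A : Type} (φ ψ : Form A) (R : A → Base → Base → Prop)
    (hR : ∀ a, S5Rel (R a)) (B : Base) :
    GammaValid R {(φ.imp .bot).imp (ψ.imp .bot)} B (ψ.imp φ) := by
  intro C _ hΓ D hCD hψ
  by_contra hφ
  obtain ⟨E, hE, hDE, hEφ⟩ := exists_maxCon_superset_not_valid hR φ hφ
  have hψE : Valid R E ψ := Valid.mono hR ψ hDE hψ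
  have hnψ : Valid R E (ψ.imp .bot) := hΓ _ rfl E (hCD.trans hDE) (hE.valid_neg_of_not_valid hEφ)
  exact hE.1 (hnψ E subset_rfl hψE)
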